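/- Let γ ≥ 1, let n ≥ 1 be an integer, let λ > 0, and set x₀ := (λ/(nπ)²)^{1/(2γ)}; assume x₀ ≤ 1. Let v : [−1,1] → ℝ be twice continuously differentiable, even, with ∫_{−1}^1 v(x)² dx = 1 and −v″(x) + ((nπ)² |x|^{2γ} − λ) v(x) = 0 for all x ∈ (−1,1). Then |v′(x₀)| ≤ √(x₀) · λ. -/

import Mathlib

/-!
Evenness forces `v'(0) = 0`, so `v'(x₀) = ∫₀^{x₀} v''`. On `(0, x₀)` the potential satisfies
`0 ≤ (nπ)² x^{2γ} ≤ λ`, so the equation gives `|v''| ≤ λ |v|`, and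
`∫₀^{x₀} |v| ≤ √x₀ (∫₀^{x₀} v²)^{1/2} ≤ √x₀` by Cauchy–Schwarz and the normalization.
-/

open MeasureTheory Set Filter Topology

lemma HasDerivAt.eq_zero_of_even {F : Type*} [NormedAddCommGroup F] [NormedSpace ℝ F]
    {f : ℝ → F} {f' : F} (hf : HasDerivAt f f' 0) (heven : (fun x ↦ f (-x)) =ᶠ[𝓝 0] f) :
    f' = 0 := by
  have h := heven.deriv_eq
  rw [deriv_comp_neg, neg_zero, hf.deriv] at h
  have h2 : (2 : ℝ) • f' = 0 := by rw [two_smul]; nth_rw 1 [← h]; exact neg_add_cancel f'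
  exact (smul_eq_zero.mp h2).resolve_left two_ne_zero

lemma abs_mul_rpow_sub_le {c lam p x : ℝ} (hc : 0 ≤ c) (hlam : 0 ≤ lam) (hp : 0 < p)
    (hx : 0 ≤ x) (hxle : x ≤ (lam / c) ^ (1 / p)) : |c * x ^ p - lam| ≤ lam := by
  suffices c * x ^ p ≤ lam by
    rw [abs_le]
    constructor <;> nlinarith [Real.rpow_nonneg hx p]
  rcases hc.eq_or_lt with rfl | hc
  · simpa using hlam
  calc c * x ^ p ≤ c * ((lam / c) ^ (1 / p)) ^ p := by gcongr
    _ = lam := by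
      rw [one_div, Real.rpow_inv_rpow (by positivity) hp.ne', mul_div_cancel₀ _ hc.ne']

/-- The case `∫ f² ≤ 1` of Cauchy–Schwarz, via `|y| ≤ (1 + a y²) / (2 √a)`. -/
lemma integral_abs_le_sqrt_of_integral_sq_le_one {f : ℝ → ℝ} {a : ℝ} (ha : 0 ≤ a)
    (hf : ContinuousOn f (Icc 0 a)) (hsq : ∫ x in 0..a, f x ^ 2 ≤ 1) :
    ∫ x in 0..a, |f x| ≤ √a := by
  rcases ha.eq_or_lt with rfl | ha
  · simp
  set s := √a
  have hs : 0 < s := Real.sqrt_pos.mpr ha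
  have hs2 : s ^ 2 = a := Real.sq_sqrt ha.le
  have hint : IntervalIntegrable (fun x ↦ f x ^ 2) volume 0 a :=
    (hf.pow 2).intervalIntegrable_of_Icc ha.le
  have hpt : ∀ x ∈ Icc 0 a, |f x| ≤ 1 / (2 * s) + s / 2 * f x ^ 2 := by
    intro x _
    rw [← sq_abs (f x), div_add' _ _ _ (by positivity), le_div_iff₀ (by positivity)]
    nlinarith [sq_nonneg (1 - s * |f x|)]
  calc ∫ x in 0..a, |f x|
      ≤ ∫ x in 0..a, (1 / (2 * s) + s / 2 * f x ^ 2) :=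
        intervalIntegral.integral_mono_on ha.le (hf.abs.intervalIntegrable_of_Icc ha.le)
          (intervalIntegrable_const.add (hint.const_mul _)) hpt
    _ = a / (2 * s) + s / 2 * ∫ x in 0..a, f x ^ 2 := by
        rw [intervalIntegral.integral_add intervalIntegrable_const (hint.const_mul _),
          intervalIntegral.integral_const_mul, intervalIntegral.integral_const, smul_eq_mul]
        ring
    _ ≤ a / (2 * s) + s / 2 * 1 := by gcongr
    _ = s := by rw [← hs2]; field_simp; ring

lemma abs_deriv_le_of_abs_deriv2_le {v v' v'' : ℝ → ℝ} {a lam : ℝ} (ha : 0 ≤ a) (hlam : 0 ≤ lam)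
    (hv : ContinuousOn v (Icc 0 a)) (hv' : ContinuousOn v' (Icc 0 a))
    (hv'' : ∀ x ∈ Ioo 0 a, HasDerivAt v' (v'' x) x) (hv''int : IntervalIntegrable v'' volume 0 a)
    (h0 : v' 0 = 0) (hbound : ∀ x ∈ Ioo 0 a, |v'' x| ≤ lam * |v x|)
    (hsq : ∫ x in 0..a, v x ^ 2 ≤ 1) :
    |v' a| ≤ √a * lam := by
  have hftc : ∫ x in 0..a, v'' x = v' a := by
    rw [intervalIntegral.integral_eq_sub_of_hasDerivAt_of_le ha hv' hv'' hv''int, h0, sub_zero]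
  calc |v' a| = |∫ x in 0..a, v'' x| := by rw [hftc]
    _ ≤ ∫ x in 0..a, |v'' x| := intervalIntegral.abs_integral_le_integral_abs ha
    _ ≤ ∫ x in 0..a, lam * |v x| :=
        intervalIntegral.integral_mono_on_of_le_Ioo ha hv''int.abs
          ((hv.abs.intervalIntegrable_of_Icc ha).const_mul lam) hbound
    _ = lam * ∫ x in 0..a, |v x| := intervalIntegral.integral_const_mul _ _
    _ ≤ lam * √a := by gcongr; exact integral_abs_le_sqrt_of_integral_sq_le_one ha hv hsq
    _ = √a * lam := mul_comm _ _

lemma intervalIntegral_le_setIntegral_Ioo {f : ℝ → ℝ} {a b c d : ℝ} (hab : a ≤ b) (hca : c ≤ a)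
    (hbd : b ≤ d) (hf : IntegrableOn f (Ioo c d)) (hf0 : 0 ≤ f) :
    ∫ x in a..b, f x ≤ ∫ x in Ioo c d, f x := by
  rw [intervalIntegral.integral_of_le hab, integral_Ioc_eq_integral_Ioo]
  exact setIntegral_mono_set hf (Eventually.of_forall hf0) (Ioo_subset_Ioo hca hbd).eventuallyLE

theorem eigenfunction_derivative_bound_general
    (γ : ℝ) (hγ : 1 ≤ γ) (n : ℕ) (lam : ℝ) (hlam : 0 < lam)
    (x₀ : ℝ) (hx₀ : x₀ = (lam / ((n : ℝ) * Real.pi) ^ 2) ^ (1 / (2 * γ)))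
    (hx₀1 : x₀ ≤ 1)
    (v v' v'' : ℝ → ℝ)
    (hv1 : ∀ x ∈ Set.Icc (-1 : ℝ) 1, HasDerivWithinAt v (v' x) (Set.Icc (-1 : ℝ) 1) x)
    (hv2 : ∀ x ∈ Set.Icc (-1 : ℝ) 1, HasDerivWithinAt v' (v'' x) (Set.Icc (-1 : ℝ) 1) x)
    (hv3 : ContinuousOn v'' (Set.Icc (-1 : ℝ) 1))
    (heven : ∀ x ∈ Set.Icc (-1 : ℝ) 1, v (-x) = v x)
    (hnorm : ∫ x in Set.Ioo (-1 : ℝ) 1, (v x) ^ 2 = 1)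
    (hode : ∀ x ∈ Set.Ioo (-1 : ℝ) 1,
      -v'' x + (((n : ℝ) * Real.pi) ^ 2 * |x| ^ (2 * γ) - lam) * v x = 0) :
    |v' x₀| ≤ Real.sqrt x₀ * lam := by
  have hI : Icc (-1 : ℝ) 1 ∈ 𝓝 0 := Icc_mem_nhds (by norm_num) (by norm_num)
  have hx₀0 : 0 ≤ x₀ := hx₀ ▸ Real.rpow_nonneg (by positivity) _
  have hIcc : Icc 0 x₀ ⊆ Icc (-1) 1 := Icc_subset_Icc (by norm_num) hx₀1
  have hIoo : Ioo 0 x₀ ⊆ Ioo (-1) 1 := Ioo_subset_Ioo (by norm_num) hx₀1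
  have hv : ContinuousOn v (Icc (-1) 1) := fun x hx ↦ (hv1 x hx).continuousWithinAt
  have hv'0 : v' 0 = 0 :=
    ((hv1 0 (mem_of_mem_nhds hI)).hasDerivAt hI).eq_zero_of_even (eventually_of_mem hI heven)
  refine abs_deriv_le_of_abs_deriv2_le hx₀0 hlam.le (hv.mono hIcc)
    (fun x hx ↦ (hv2 x (hIcc hx)).continuousWithinAt.mono hIcc) (fun x hx ↦ ?_)
    ((hv3.mono hIcc).intervalIntegrable_of_Icc hx₀0) hv'0 (fun x hx ↦ ?_) ?_
  · obtain ⟨h₁, h₂⟩ := hIoo hx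
    exact (hv2 x ⟨h₁.le, h₂.le⟩).hasDerivAt (Icc_mem_nhds h₁ h₂)
  · have hode' : v'' x = (((n : ℝ) * Real.pi) ^ 2 * |x| ^ (2 * γ) - lam) * v x := by
      linarith [hode x (hIoo hx)]
    have hcoef : |((n : ℝ) * Real.pi) ^ 2 * |x| ^ (2 * γ) - lam| ≤ lam :=
      abs_mul_rpow_sub_le (sq_nonneg _) hlam.le (by linarith) (abs_nonneg x)
        (by rw [abs_of_pos hx.1, ← hx₀]; exact hx.2.le)
    rw [hode', abs_mul]
    gcongr
  · exact hnorm ▸ intervalIntegral_le_setIntegral_Ioo hx₀0 (by norm_num) hx₀1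
      ((hv.pow 2).integrableOn_Icc.mono_set Ioo_subset_Icc_self) fun x ↦ sq_nonneg _

/-- Bound on the derivative of the normalized even eigenfunction at the point
`x₀ = (λ/(nπ)²)^(1/(2γ))`: `|v'(x₀)| ≤ √x₀ · λ`. -/
theorem eigenfunction_derivative_bound
    (γ : ℝ) (hγ : 1 ≤ γ) (n : ℕ) (hn : 1 ≤ n) (lam : ℝ) (hlam : 0 < lam)
    (x₀ : ℝ) (hx₀ : x₀ = (lam / ((n : ℝ) * Real.pi) ^ 2) ^ (1 / (2 * γ)))
    (hx₀1 : x₀ ≤ 1)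
    (v v' v'' : ℝ → ℝ)
    (hv1 : ∀ x ∈ Set.Icc (-1 : ℝ) 1, HasDerivWithinAt v (v' x) (Set.Icc (-1 : ℝ) 1) x)
    (hv2 : ∀ x ∈ Set.Icc (-1 : ℝ) 1, HasDerivWithinAt v' (v'' x) (Set.Icc (-1 : ℝ) 1) x)
    (hv3 : ContinuousOn v'' (Set.Icc (-1 : ℝ) 1))
    (heven : ∀ x ∈ Set.Icc (-1 : ℝ) 1, v (-x) = v x)
    (hnorm : ∫ x in Set.Ioo (-1 : ℝ) 1, (v x) ^ 2 = 1)
    (hode : ∀ x ∈ Set.Ioo (-1 : ℝ) 1,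
      -v'' x + (((n : ℝ) * Real.pi) ^ 2 * |x| ^ (2 * γ) - lam) * v x = 0) :
    |v' x₀| ≤ Real.sqrt x₀ * lam :=
  eigenfunction_derivative_bound_general γ hγ n lam hlam x₀ hx₀ hx₀1 v v' v'' hv1 hv2 hv3 heven
    hnorm hode
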